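/- arXiv:2201.02332 — 7 statements merged into one kernel-verified Lean document; each statement's English description precedes it below -/
import Mathlib

section
/- Let n be even, and let f: {1,...,n} → {1,...,n} satisfy f(i) = 1 for i ≤ n/2 and f(i) = 2 otherwise. Then the fraction of permutations of {1,...,n} that are f-derangements equals (n/2)²/(n(n-1)), and this fraction tends to 1/4 as n → ∞. -/
/-!
Let `x` and `y` be the values of `f` on the first and on the second half. A permutation `g` avoids
`f` exactly when `g⁻¹ x` lies in the second half and `g⁻¹ y` in the first. The symmetric group acts
2-transitively, so every fibre of `g ↦ (g⁻¹ x, g⁻¹ y)` over a pair of distinct points is a coset of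
the pointwise stabiliser of `{x, y}`, which has `(n - 2)!` elements. Hence `(n / 2)² (n - 2)!` of
the `n! = n (n - 1) (n - 2)!` permutations avoid `f`.
-/

open Filter Finset Equiv

namespace Equiv.Perm

variable {α : Type*}

theorem forall_apply_ne_iff {P : α → Prop} {f : α → α} {x y : α}
    (hx : ∀ i, P i → f i = x) (hy : ∀ i, ¬P i → f i = y) (g : Perm α) :
    (∀ i, g i ≠ f i) ↔ ¬P (g.symm x) ∧ P (g.symm y) := by
  constructor
  · intro h
    refine ⟨fun hPx => h (g.symm x) ?_, not_not.mp fun hPy => h (g.symm y) ?_⟩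
    · rw [hx _ hPx, apply_symm_apply]
    · rw [hy _ hPy, apply_symm_apply]
  · rintro ⟨hPx, hPy⟩ i hi
    by_cases hPi : P i
    · rw [hx i hPi, ← eq_symm_apply] at hi
      exact hPx (hi ▸ hPi)
    · rw [hy i hPi, ← eq_symm_apply] at hi
      exact hPi (hi ▸ hPy)

variable [Fintype α] [DecidableEq α]

theorem card_filter_apply_eq_self_and_apply_eq_self {x y : α} (hxy : x ≠ y) :
    #{g : Perm α | g x = x ∧ g y = y} = (Fintype.card α - 2).factorial := by
  have e : {g : Perm α // g x = x ∧ g y = y} ≃ Perm {z // z ∉ ({x, y} : Finset α)} :=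
    (Equiv.subtypeEquivRight fun g => by simp [← or_iff_not_imp_left, or_imp, forall_and]).trans
      (Perm.subtypeEquivSubtypePerm _).symm
  rw [← Fintype.card_subtype, Fintype.card_congr e, Fintype.card_perm, Fintype.card_subtype_compl,
    Fintype.card_coe, card_pair hxy]

theorem card_filter_apply_eq_and_apply_eq {a b x y : α} (hab : a ≠ b) (hxy : x ≠ y) :
    #{g : Perm α | g a = x ∧ g b = y} = (Fintype.card α - 2).factorial := by
  obtain ⟨σ, hσa, hσb⟩ :=
    MulAction.is_two_pretransitive_iff.mp (Perm.isMultiplyPretransitive α 2) hab hxy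
  rw [Perm.smul_def] at hσa hσb
  rw [← card_filter_apply_eq_self_and_apply_eq_self hxy]
  refine card_equiv (Equiv.mulRight σ⁻¹) fun g => ?_
  simp [← hσa, ← hσb]

theorem card_filter_symm_apply_mem {x y : α} (hxy : x ≠ y) {T : Finset (α × α)}
    (hT : ∀ p ∈ T, p.1 ≠ p.2) :
    #{g : Perm α | (g.symm x, g.symm y) ∈ T} = #T * (Fintype.card α - 2).factorial := by
  refine (card_eq_sum_card_fiberwise (f := fun g : Perm α => (g.symm x, g.symm y)) (t := T)
    fun g hg => (mem_filter.mp hg).2).trans ?_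
  rw [← smul_eq_mul, ← sum_const]
  refine sum_congr rfl fun p hp => ?_
  rw [← card_filter_apply_eq_and_apply_eq (hT p hp) hxy, filter_filter]
  congr 1
  ext g
  simp only [mem_filter, mem_univ, true_and, Prod.ext_iff, symm_apply_eq]
  constructor
  · rintro ⟨-, hx, hy⟩
    exact ⟨hx.symm, hy.symm⟩
  · rintro ⟨hx, hy⟩
    exact ⟨by rw [← hx, ← hy]; simpa using hp, hx.symm, hy.symm⟩

theorem card_filter_forall_apply_ne {P : α → Prop} [DecidablePred P] {f : α → α}
    [DecidablePred fun g : Perm α => ∀ i, g i ≠ f i] {x y : α}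
    (hxy : x ≠ y) (hx : ∀ i, P i → f i = x) (hy : ∀ i, ¬P i → f i = y) :
    #{g : Perm α | ∀ i, g i ≠ f i}
      = #{i | ¬P i} * #{i | P i} * (Fintype.card α - 2).factorial := by
  have hT : ∀ p ∈ ({i | ¬P i} : Finset α) ×ˢ ({i | P i} : Finset α), p.1 ≠ p.2 := by
    rintro ⟨i, j⟩ hp (rfl : i = j)
    simp at hp
  rw [← card_product, ← card_filter_symm_apply_mem hxy hT]
  congr 1
  ext g
  simp [forall_apply_ne_iff hx hy]

end Equiv.Perm

theorem card_filter_fin_val_lt_half_of_even {n : ℕ} (hn : Even n) :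
    #{i : Fin n | i.val < n / 2} = n / 2 ∧ #{i : Fin n | ¬i.val < n / 2} = n / 2 := by
  have hlt : #{i : Fin n | i.val < n / 2} = n / 2 := by
    rw [Fin.card_filter_val_lt]
    omega
  refine ⟨hlt, ?_⟩
  have := card_filter_add_card_filter_not (s := univ) (p := fun i : Fin n => i.val < n / 2)
  rw [card_univ, Fintype.card_fin, hlt] at this
  obtain ⟨k, rfl⟩ := hn
  omega

theorem Nat.factorial_eq_mul_mul_factorial_sub_two {n : ℕ} (hn : 2 ≤ n) :
    n.factorial = n * (n - 1) * (n - 2).factorial := by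
  obtain ⟨m, rfl⟩ := Nat.exists_eq_add_of_le' hn
  simp [Nat.factorial_succ, mul_assoc]

theorem tendsto_half_sq_div_mul_sub_one :
    Tendsto (fun n : ℕ => ((n : ℝ) / 2) ^ 2 / ((n : ℝ) * ((n : ℝ) - 1))) atTop (nhds (1 / 4)) := by
  have h : Tendsto (fun n : ℕ => (1 / 4 : ℝ) / (1 - 1 / (n : ℝ))) atTop (nhds ((1 / 4) / (1 - 0))) :=
    tendsto_const_nhds.div (tendsto_const_nhds.sub tendsto_one_div_atTop_nhds_zero_nat) (by simp)
  rw [sub_zero, div_one] at h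
  refine h.congr' ?_
  filter_upwards [eventually_ge_atTop 2] with n hn
  have hn : (2 : ℝ) ≤ n := by exact_mod_cast hn
  field_simp
  ring

/-- For n even with f(i)=1 on the first half and f(i)=2 on the second half, the
fraction of permutations that are f-derangements equals (n/2)²/(n(n-1)), and this
fraction tends to 1/4 as n → ∞. -/
theorem stmt_3 :
    (∀ (n : ℕ) (hn : 2 ≤ n), Even n → ∀ f : Fin n → Fin n,
      (∀ i : Fin n, i.val < n / 2 → f i = ⟨0, by omega⟩) →
      (∀ i : Fin n, n / 2 ≤ i.val → f i = ⟨1, by omega⟩) →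
      ((Finset.univ.filter fun g : Equiv.Perm (Fin n) => ∀ i, g i ≠ f i).card : ℝ)
          / (Nat.factorial n)
        = ((n : ℝ) / 2) ^ 2 / ((n : ℝ) * ((n : ℝ) - 1)))
    ∧ Tendsto (fun n : ℕ => ((n : ℝ) / 2) ^ 2 / ((n : ℝ) * ((n : ℝ) - 1)))
        atTop (nhds (1 / 4)) := by
  refine ⟨fun n hn hev f hf0 hf1 => ?_, tendsto_half_sq_div_mul_sub_one⟩
  have hcount := Perm.card_filter_forall_apply_ne (by simp [Fin.ext_iff]) hf0
    fun i hi => hf1 i (not_lt.mp hi)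
  obtain ⟨hlow, hhigh⟩ := card_filter_fin_val_lt_half_of_even hev
  rw [Fintype.card_fin, hlow, hhigh] at hcount
  have hhalf : ((n / 2 : ℕ) : ℝ) = n / 2 := Nat.cast_div_charZero (even_iff_two_dvd.mp hev)
  rw [hcount, Nat.factorial_eq_mul_mul_factorial_sub_two hn]
  have hnR : (2 : ℝ) ≤ n := by exact_mod_cast hn
  push_cast [Nat.cast_sub (by omega : 1 ≤ n), hhalf]
  field_simp
end

section
/- Fix s ≥ 1, and let n be a multiple of s. Define f: {1,...,n} → {1,...,n} so that f takes each of the values 1,...,s exactly n/s times (an equitable split among s images). Then as n → ∞ (through multiples of s), the fraction of permutations of {1,...,n} that are f-derangements tends to ((s-1)/s)^s. -/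
/-!
Write `m = n / s` and `V = {1, …, s}`. By inclusion–exclusion over the sets `T ⊆ V` of values `y`
with `f (g⁻¹ y) = y`, the number of `f`-derangements is `∑ₖ (-1)ᵏ C(s,k) mᵏ (n-k)!`: a permutation
with `f (g⁻¹ y) = y` for all `y ∈ T` is a choice of one point in each fibre `f⁻¹ y` (`m ^ #T` ways)
followed by an extension of that injection `T → Fin n` to a permutation (`(n - #T)!` ways).
After dividing by `n!` the `k`-th term is `C(s,k) (-1/s)ᵏ nᵏ / n.descFactorial k → C(s,k) (-1/s)ᵏ`,
and the binomial theorem sums these limits to `(1 - 1/s)ˢ`.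
-/

open Filter Finset Topology Asymptotics

section PermCounting

variable {α : Type*} [Fintype α] [DecidableEq α]

theorem card_perm_extending (s : Finset α) (σ : s ↪ α) :
    #{g : Equiv.Perm α | ∀ a : s, g a = σ a} = (Fintype.card α - #s).factorial := by
  let g₀ : Equiv.Perm α := (Equiv.ofInjective σ σ.injective).extendSubtype
  have hg₀ (a : s) : g₀ a = σ a := by
    simp [g₀, Equiv.extendSubtype_apply_of_mem]
  -- `g ↦ g₀⁻¹ * g` identifies the extensions of `σ` with the permutations fixing `s` pointwise
  let e : {g : Equiv.Perm α // ∀ a : s, g a = σ a} ≃ Equiv.Perm {x // x ∉ s} :=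
    ((Equiv.mulLeft g₀⁻¹).subtypeEquiv fun g => by
        simp [Equiv.symm_apply_eq, ← hg₀]).trans
      (Equiv.Perm.subtypeEquivSubtypePerm (· ∉ s)).symm
  rw [← Fintype.card_subtype, Fintype.card_congr e, Fintype.card_perm]
  simp

theorem card_perm_apply_mem_fiber (f : α → α) (T : Finset α) :
    #{h : Equiv.Perm α | ∀ y ∈ T, f (h y) = y}
      = (∏ y ∈ T, #{i | f i = y}) * (Fintype.card α - #T).factorial := by
  let restrict (h : Equiv.Perm α) : T → α := fun y => h y
  have hmaps : Set.MapsTo restrict (({h | ∀ y ∈ T, f (h y) = y} : Finset (Equiv.Perm α)) : Set _)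
      (Fintype.piFinset fun y : T => {i | f i = y}) := by
    intro h hh
    simp_all [restrict]
  rw [card_eq_sum_card_fiberwise hmaps]
  have hfiber : ∀ σ ∈ Fintype.piFinset (fun y : T => ({i | f i = y} : Finset α)),
      #{h ∈ {h : Equiv.Perm α | ∀ y ∈ T, f (h y) = y} | restrict h = σ}
        = (Fintype.card α - #T).factorial := by
    intro σ hσ
    have hfσ (y : T) : f (σ y) = y := by simpa using Fintype.mem_piFinset.1 hσ y
    have hσ : Function.Injective σ := fun y z hyz => Subtype.ext (by rw [← hfσ y, ← hfσ z, hyz])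
    rw [← card_perm_extending T ⟨σ, hσ⟩]
    congr 1
    ext h
    simp only [mem_filter, mem_univ, true_and, restrict, funext_iff, Function.Embedding.coeFn_mk]
    constructor
    · exact fun hh => hh.2
    · intro hh
      exact ⟨fun y hy => by rw [hh ⟨y, hy⟩, hfσ], hh⟩
  rw [sum_congr rfl hfiber, sum_const, Fintype.card_piFinset, smul_eq_mul,
    prod_coe_sort T fun y => #{i | f i = y}]

theorem card_perm_ne_eq_sum_powerset (f : α → α) (V : Finset α) (hf : ∀ i, f i ∈ V) :
    (#{g : Equiv.Perm α | ∀ i, g i ≠ f i} : ℤ)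
      = ∑ T ∈ V.powerset, (-1) ^ #T * (#{h : Equiv.Perm α | ∀ y ∈ T, f (h y) = y} : ℤ) := by
  have hinv : #{g : Equiv.Perm α | ∀ i, g i ≠ f i}
      = #(V.inf fun y => ({h : Equiv.Perm α | f (h y) = y} : Finset _)ᶜ) := by
    refine card_nbij' (·⁻¹) (·⁻¹) ?_ ?_ (fun g _ => inv_inv g) (fun g _ => inv_inv g)
    · intro g hg
      simp only [mem_coe, mem_filter, mem_univ, true_and, mem_inf, mem_compl] at hg ⊢
      intro y _ hy
      exact hg (g⁻¹ y) (by rw [hy]; exact g.apply_symm_apply y)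
    · intro g hg
      simp only [mem_coe, mem_filter, mem_univ, true_and, mem_inf, mem_compl] at hg ⊢
      intro i hi
      have hgf : g (f i) = i := by rw [← hi]; exact g.apply_symm_apply i
      exact hg (f i) (hf i) (by rw [hgf])
  rw [hinv, inclusion_exclusion_card_inf_compl]
  refine sum_congr rfl fun T _ => ?_
  congr 3
  ext h
  simp [mem_inf]

theorem card_perm_ne_of_card_fiber_eq (f : α → α) (V : Finset α) (m : ℕ) (hf : ∀ i, f i ∈ V)
    (hfib : ∀ y ∈ V, #{i | f i = y} = m) :
    (#{g : Equiv.Perm α | ∀ i, g i ≠ f i} : ℤ)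
      = ∑ k ∈ range (#V + 1),
          (#V).choose k * (-1) ^ k * m ^ k * ((Fintype.card α - k).factorial : ℤ) := by
  rw [card_perm_ne_eq_sum_powerset f V hf]
  have hterm : ∀ T ∈ V.powerset, (-1) ^ #T * (#{h : Equiv.Perm α | ∀ y ∈ T, f (h y) = y} : ℤ)
      = (-1) ^ #T * m ^ #T * ((Fintype.card α - #T).factorial : ℤ) := by
    intro T hT
    rw [card_perm_apply_mem_fiber, prod_congr rfl fun y hy => hfib y (mem_powerset.1 hT hy),
      prod_const]
    push_cast
    ring
  rw [sum_congr rfl hterm, sum_powerset_apply_card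
    (fun k => (-1) ^ k * m ^ k * ((Fintype.card α - k).factorial : ℤ))]
  simp only [nsmul_eq_mul, mul_assoc]

end PermCounting

theorem tendsto_pow_div_descFactorial (k : ℕ) :
    Tendsto (fun n : ℕ => (n : ℝ) ^ k / n.descFactorial k) atTop (𝓝 1) := by
  refine (isEquivalent_iff_tendsto_one ?_).1 (isEquivalent_descFactorial k).symm
  filter_upwards [eventually_ge_atTop k] with n hn
  exact_mod_cast (Nat.descFactorial_pos.2 hn).ne'

theorem cast_factorial_sub_div_factorial {n k : ℕ} (hk : k ≤ n) :
    ((n - k).factorial : ℝ) / n.factorial = (n.descFactorial k : ℝ)⁻¹ := by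
  rw [← Nat.factorial_mul_descFactorial hk, Nat.cast_mul, div_mul_cancel_left₀]
  exact_mod_cast (Nat.factorial_pos _).ne'

theorem tendsto_sum_choose_mul_pow_div_descFactorial (s : ℕ) (x : ℝ) :
    Tendsto (fun n : ℕ => ∑ k ∈ range (s + 1),
      (s.choose k : ℝ) * x ^ k * ((n : ℝ) ^ k / n.descFactorial k)) atTop (𝓝 ((x + 1) ^ s)) := by
  have hbinom : (x + 1) ^ s = ∑ k ∈ range (s + 1), (s.choose k : ℝ) * x ^ k * 1 := by
    simp [add_pow, mul_comm]
  rw [hbinom]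
  exact tendsto_finsetSum _ fun k _ => tendsto_const_nhds.mul (tendsto_pow_div_descFactorial k)

/-- Fix s ≥ 1. For each n a multiple of s, let f_n : {1,...,n} → {1,...,n} take
each of the values 1,...,s exactly n/s times (and only those values). Then as
n → ∞ through multiples of s, the fraction of permutations of {1,...,n} that are
f_n-derangements tends to ((s-1)/s)^s. -/
theorem stmt_4 (s : ℕ) (hs : 1 ≤ s) (F : (n : ℕ) → Fin n → Fin n)
    (hval : ∀ n, s ∣ n → ∀ i : Fin n, (F n i).val < s)
    (heq : ∀ n, s ∣ n → ∀ y : Fin n, y.val < s →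
      (Finset.univ.filter fun i : Fin n => F n i = y).card = n / s) :
    Tendsto
      (fun n : ℕ =>
        ((Finset.univ.filter fun g : Equiv.Perm (Fin n) => ∀ i, g i ≠ F n i).card : ℝ)
          / (Nat.factorial n))
      (atTop ⊓ Filter.principal {n | s ∣ n})
      (nhds ((((s : ℝ) - 1) / s) ^ s)) := by
  have hs₀ : (s : ℝ) ≠ 0 := Nat.cast_ne_zero.2 (by omega)
  have hlim := tendsto_sum_choose_mul_pow_div_descFactorial s (-1 / s)
  rw [show -1 / (s : ℝ) + 1 = (s - 1) / s by field_simp; ring] at hlim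
  refine (hlim.mono_left inf_le_left).congr' (eventually_inf_principal.2 ?_)
  filter_upwards [eventually_ge_atTop s] with n hsn hdvd
  have hcount : (#{g : Equiv.Perm (Fin n) | ∀ i, g i ≠ F n i} : ℤ) = ∑ k ∈ range (s + 1),
      s.choose k * (-1) ^ k * ((n / s : ℕ) : ℤ) ^ k * ((n - k).factorial : ℤ) := by
    simpa [Fin.card_filter_val_lt, hsn] using card_perm_ne_of_card_fiber_eq (F n) {y | y.val < s}
      (n / s) (fun i => by simpa using hval n hdvd i) (fun y hy => heq n hdvd y (by simpa using hy))
  have hcountℝ : (#{g : Equiv.Perm (Fin n) | ∀ i, g i ≠ F n i} : ℝ) = ∑ k ∈ range (s + 1),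
      (s.choose k : ℝ) * (-1) ^ k * ((n / s : ℕ) : ℝ) ^ k * ((n - k).factorial : ℝ) := by
    simpa only [Int.cast_natCast, Int.cast_sum, Int.cast_mul, Int.cast_pow, Int.cast_neg,
      Int.cast_one] using congrArg (Int.cast : ℤ → ℝ) hcount
  rw [hcountℝ, sum_div]
  refine sum_congr rfl fun k hk => ?_
  have hkn : k ≤ n := (Nat.lt_succ_iff.1 (mem_range.1 hk)).trans hsn
  rw [mul_div_assoc, cast_factorial_sub_div_factorial hkn, Nat.cast_div hdvd hs₀]
  ring
end

section
/- Let f: {1,...,n} → {1,...,n} be a function such that some pair i ≠ j has f(i) = f(j). Then the number of permutations g of {1,...,n} with g(k) ≠ f(k) for all k is even. -/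
lemma even_card_of_invol {α : Type*} [DecidableEq α] (s : Finset α) (σ : α → α)
    (hσ : ∀ a ∈ s, σ a ∈ s) (hinv : ∀ a ∈ s, σ (σ a) = a) (hne : ∀ a ∈ s, σ a ≠ a) :
    Even s.card := by
  induction s using Finset.strongInduction with
  | _ s ih =>
    rcases s.eq_empty_or_nonempty with rfl | ⟨a, ha⟩
    · simp
    · have h1 : σ a ∈ s := hσ a ha
      have h2 : σ a ∈ s.erase a := Finset.mem_erase.2 ⟨hne a ha, h1⟩
      set t := (s.erase a).erase (σ a) with ht
      have hsub : t ⊂ s :=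
        lt_of_le_of_lt (Finset.erase_subset _ _) (Finset.erase_ssubset ha)
      have hmem : ∀ b, b ∈ t ↔ b ∈ s ∧ b ≠ a ∧ b ≠ σ a := by
        intro b
        simp only [ht, Finset.mem_erase]
        tauto
      have hcard : s.card = t.card + 2 := by
        rw [ht, Finset.card_erase_of_mem h2]
        have h3 := Finset.card_pos.2 ⟨σ a, h2⟩
        have h4 := Finset.card_erase_of_mem ha
        have h5 := Finset.card_pos.2 ⟨a, ha⟩
        omega
      have het : Even t.card := by
        apply ih t hsub
        · intro b hb
          obtain ⟨hbs, hba, hbsa⟩ := (hmem b).1 hb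
          refine (hmem (σ b)).2 ⟨hσ b hbs, ?_, ?_⟩
          · intro h; apply hbsa; rw [← h, hinv b hbs]  -- σ b = a → b = σ a
          · intro h
            apply hba
            have := congrArg σ h
            rwa [hinv b hbs, hinv a ha] at this
        · intro b hb; exact hinv b ((hmem b).1 hb).1
        · intro b hb; exact hne b ((hmem b).1 hb).1
      rw [hcard]
      exact het.add (Even.add_self 1)

/-- If f : {1,...,n} → {1,...,n} has two distinct elements i ≠ j with f(i) = f(j),
then the number of permutations g with g(k) ≠ f(k) for all k is even. -/
theorem stmt_6 (n : ℕ) (f : Fin n → Fin n) (i j : Fin n) (hij : i ≠ j)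
    (hf : f i = f j) :
    Even (Finset.univ.filter fun g : Equiv.Perm (Fin n) => ∀ k, g k ≠ f k).card := by
  apply even_card_of_invol _ (fun g => g * Equiv.swap i j)
  · intro g hg
    simp only [Finset.mem_filter, Finset.mem_univ, true_and] at hg ⊢
    intro k
    rcases eq_or_ne k i with rfl | hki
    · simpa [Equiv.swap_apply_left, hf] using hg j
    rcases eq_or_ne k j with rfl | hkj
    · simpa [Equiv.swap_apply_right, ← hf] using hg i
    · simpa [Equiv.swap_apply_of_ne_of_ne hki hkj] using hg k
  · intro g _
    simp [mul_assoc]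
  · intro g _ h
    have := congrFun (congrArg (fun p : Equiv.Perm (Fin n) => (p : Fin n → Fin n)) h) i
    simp only [Equiv.Perm.coe_mul, Function.comp_apply, Equiv.swap_apply_left] at this
    exact hij (g.injective this).symm
end

section
/- Define D[A,B,C] to be the number of permutations g of a set of size n = A + B + C avoiding a 2-max partial function f with parameters A, B, C. Then if B ≥ 2 and the parameters are realizable, D[A,B,C] = D[A+2,B-2,C] + D[A,B-2,C]. -/
/-- Number of permutations avoiding a partial function `f` (an f-derangement):
permutations `g` with `g i ≠ f i` whenever `f i` is defined. -/
def avoidCount {n : ℕ} (f : Fin n → Option (Fin n)) : ℕ :=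
  (Finset.univ.filter fun g : Equiv.Perm (Fin n) => ∀ i, f i ≠ some (g i)).card

/-- `f` is a 2-max partial function with parameters `A` (elements sharing their image
with another element), `B` (elements with a unique image), `C` (elements where `f` is
undefined): every value has at most 2 preimages. -/
def TwoMaxParams {n : ℕ} (f : Fin n → Option (Fin n)) (A B C : ℕ) : Prop :=
  (∀ y : Fin n, (Finset.univ.filter fun i => f i = some y).card ≤ 2) ∧
  A = (Finset.univ.filter fun i : Fin n => f i ≠ none ∧ ∃ j, j ≠ i ∧ f j = f i).card ∧
  B = (Finset.univ.filter fun i : Fin n => f i ≠ none ∧ ∀ j, j ≠ i → f j ≠ f i).card ∧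
  C = (Finset.univ.filter fun i : Fin n => f i = none).card

/-!
The number of `f`-avoiding permutations depends only on the fibre profile of `f`: the number of
points where `f` is undefined and, for each `k`, the number of values with exactly `k` preimages.
Two partial maps with the same profile are conjugate, `f' ∘ φ = Option.map ψ ∘ f` for bijections
`φ` and `ψ`, and `g ↦ ψ ∘ g ∘ φ⁻¹` matches their avoiding permutations. For 2-max maps on sets of
the same size the profile is determined by `(A, B, C)`.

So it suffices to check the recursion on one model built from `f₂`: adjoin two points `a = none`
and `b = some none` to its domain and send `a ↦ b`, `b ↦ a` (parameters `(A, B, C)`), or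
`a ↦ b`, `b ↦ b` (parameters `(A + 2, B - 2, C)`). A permutation `g` avoiding the first map either
has `g b ≠ b`, and then it avoids the second one with `g b ≠ a`; or it fixes `b` but not `a`, and
then `swap a b * g` avoids the second one and sends `b` to `a`; or it fixes `a` and `b`, and then
it is an `f₂`-avoiding permutation extended by the identity.
-/

open Finset Equiv

theorem card_filter_eq_add_card_filter_and {γ : Type*} [Fintype γ] (p q : γ → Prop)
    [DecidablePred p] [DecidablePred q] :
    #{x | p x} = #{x | p x ∧ q x} + #{x | p x ∧ ¬q x} := by
  rw [← card_filter_add_card_filter_not (s := {x | p x}) q, filter_filter, filter_filter]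

theorem card_filter_option_option {γ : Type*} [Fintype γ] (p : Option (Option γ) → Prop)
    [DecidablePred p] :
    #{w | p w} = (if p none then 1 else 0) + (if p (some none) then 1 else 0) +
      #{y | p (some (some y))} := by
  simp only [card_filter, Fintype.sum_option, add_assoc]

section Profile

variable {α β : Type*} [Fintype α] [DecidableEq α] [Fintype β] [DecidableEq β]

def avoidCard (f : α → Option α) : ℕ := #{g : Perm α | ∀ i, f i ≠ some (g i)}

def fiberCard (f : α → Option α) (y : α) : ℕ := #{i | f i = some y}

def multCount (f : α → Option α) (k : ℕ) : ℕ := #{y | fiberCard f y = k}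

def noneCount (f : α → Option α) : ℕ := #{i | f i = none}

theorem avoidCard_eq_of_semiconj {f : α → Option α} {f' : β → Option β} (φ ψ : α ≃ β)
    (h : ∀ x, f' (φ x) = (f x).map ψ) : avoidCard f = avoidCard f' := by
  refine card_equiv (φ.equivCongr ψ) fun g => ?_
  simp only [mem_filter, mem_univ, true_and, equivCongr_apply_apply]
  rw [φ.symm.forall_congr_left]
  simp [h, Option.map_eq_some_iff]

theorem exists_semiconj_of_multCount_eq {f : α → Option α} {f' : β → Option β}
    (hnone : noneCount f = noneCount f') (hmult : ∀ k, multCount f k = multCount f' k) :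
    ∃ φ ψ : α ≃ β, ∀ x, f' (φ x) = (f x).map ψ := by
  let ψ : α ≃ β := ofFiberEquiv (f := fiberCard f) (g := fiberCard f') fun k =>
    Fintype.equivOfCardEq <| by simpa [Fintype.card_subtype, multCount] using hmult k
  have hψ (y : α) : fiberCard f' (ψ y) = fiberCard f y := ofFiberEquiv_map _ y
  refine ⟨ofFiberEquiv (f := fun x => (f x).map ψ) (g := f') fun c => Fintype.equivOfCardEq ?_,
    ψ, ofFiberEquiv_map _⟩
  rw [Fintype.card_subtype, Fintype.card_subtype]
  cases c with
  | none => simpa [noneCount] using hnone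
  | some y =>
    have := hψ (ψ.symm y)
    simp only [fiberCard, apply_symm_apply] at this
    simp [this, Option.map_eq_some_iff, ← eq_symm_apply]

theorem multCount_eq_zero_of_lt {f : α → Option α} {k : ℕ} (h : ∀ y, fiberCard f y < k) :
    multCount f k = 0 := by
  simp [multCount, fun y => (h y).ne]

theorem multCount_zero_add_one_add_two {f : α → Option α} (hle : ∀ y, fiberCard f y ≤ 2) :
    multCount f 0 + multCount f 1 + multCount f 2 = Fintype.card α := by
  have := card_eq_sum_card_fiberwise (s := univ) (t := range 3) (f := fiberCard f)
    fun y _ => by simpa [Nat.lt_succ_iff] using hle y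
  simp [sum_range_succ] at this
  simp [multCount, this]

structure IsTwoMaxProfile (f : α → Option α) (A B C : ℕ) : Prop where
  fiberCard_le_two : ∀ y, fiberCard f y ≤ 2
  two_mul_multCount_two : 2 * multCount f 2 = A
  multCount_one : multCount f 1 = B
  noneCount_eq : noneCount f = C

theorem IsTwoMaxProfile.avoidCard_eq {f : α → Option α} {f' : β → Option β} {A B C : ℕ}
    (hf : IsTwoMaxProfile f A B C) (hf' : IsTwoMaxProfile f' A B C)
    (hcard : Fintype.card α = Fintype.card β) : avoidCard f = avoidCard f' := by
  obtain ⟨hle, h2, h1, h0⟩ := hf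
  obtain ⟨hle', h2', h1', h0'⟩ := hf'
  obtain ⟨φ, ψ, h⟩ := exists_semiconj_of_multCount_eq (h0.trans h0'.symm) fun
    | 0 => by
      have := multCount_zero_add_one_add_two hle
      have := multCount_zero_add_one_add_two hle'
      omega
    | 1 => h1.trans h1'.symm
    | 2 => by omega
    | _ + 3 => by
      rw [multCount_eq_zero_of_lt fun y => (hle y).trans_lt (by omega),
        multCount_eq_zero_of_lt fun y => (hle' y).trans_lt (by omega)]
  exact avoidCard_eq_of_semiconj φ ψ h

theorem card_filter_exists_fiberCard_eq (f : α → Option α) (k : ℕ) :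
    #{i | ∃ y, f i = some y ∧ fiberCard f y = k} = k * multCount f k := by
  rw [card_eq_sum_card_fiberwise (f := f) (t := ({y | fiberCard f y = k} : Finset α).map .some)
    fun i hi => by obtain ⟨y, hy, hk⟩ := (mem_filter.1 hi).2; simp [hy, hk], sum_map]
  calc _ = ∑ y ∈ ({y | fiberCard f y = k} : Finset α), k := sum_congr rfl fun y hy => by
        refine (congrArg card ?_).trans (mem_filter.1 hy).2
        ext i
        simp only [mem_filter, mem_univ, true_and, Function.Embedding.some_apply,
          and_iff_right_iff_imp]
        exact fun hi => ⟨y, hi, (mem_filter.1 hy).2⟩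
    _ = k * multCount f k := by rw [sum_const, smul_eq_mul, mul_comm, multCount]

theorem fiberCard_pos {f : α → Option α} {i y : α} (h : f i = some y) : 0 < fiberCard f y :=
  card_pos.2 ⟨i, by simp [h]⟩

theorem forall_ne_iff_fiberCard_eq_one {f : α → Option α} {i y : α} (h : f i = some y) :
    (∀ j, j ≠ i → f j ≠ some y) ↔ fiberCard f y = 1 := by
  rw [fiberCard, card_eq_one]
  refine ⟨fun hu => ⟨i, ?_⟩, fun ⟨a, ha⟩ j hj hji => hj ?_⟩
  · ext j
    simp only [mem_filter, mem_univ, true_and, mem_singleton]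
    exact ⟨fun hj => by_contra fun hne => hu j hne hj, fun hj => hj ▸ h⟩
  · have hi : i ∈ ({a} : Finset α) := ha ▸ by simp [h]
    have hj : j ∈ ({a} : Finset α) := ha ▸ by simp [hji]
    rw [mem_singleton] at hi hj
    rw [hi, hj]

theorem TwoMaxParams.isTwoMaxProfile {n : ℕ} {f : Fin n → Option (Fin n)} {A B C : ℕ}
    (h : TwoMaxParams f A B C) : IsTwoMaxProfile f A B C := by
  obtain ⟨hle, hA, hB, hC⟩ := h
  refine ⟨hle, ?_, ?_, hC.symm⟩
  · rw [← card_filter_exists_fiberCard_eq, hA]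
    congr 1 with i
    simp only [mem_filter, mem_univ, true_and]
    rcases hi : f i with _ | y
    · simp
    · have hpos := fiberCard_pos hi
      have hle : fiberCard f y ≤ 2 := hle y
      rw [← not_iff_not]
      simp only [Option.some_inj, exists_eq_left', ne_eq, reduceCtorEq, not_false_eq_true,
        true_and, not_exists, not_and, forall_ne_iff_fiberCard_eq_one hi]
      constructor <;> omega
  · rw [← one_mul (multCount f 1), ← card_filter_exists_fiberCard_eq, hB]
    congr 1 with i
    simp only [mem_filter, mem_univ, true_and]
    rcases hi : f i with _ | y
    · simp
    · simp [← forall_ne_iff_fiberCard_eq_one hi]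

end Profile

-- The two sides differ in the `Decidable` instance for `∀ i : Fin n`, hence `congr` and not `rfl`.
theorem avoidCount_eq_avoidCard {n : ℕ} (f : Fin n → Option (Fin n)) :
    avoidCount f = avoidCard f := by
  unfold avoidCount avoidCard
  congr

section Extension

variable {β : Type*}

def withUniquePair (f : β → Option β) : Option (Option β) → Option (Option (Option β))
  | none => some (some none)
  | some none => some none
  | some (some x) => (f x).map (some ∘ some)

def withSharedPair (f : β → Option β) : Option (Option β) → Option (Option (Option β))
  | none => some (some none)
  | some none => some (some none)
  | some (some x) => (f x).map (some ∘ some)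

def AvoidsLift (f : β → Option β) (g : Perm (Option (Option β))) : Prop :=
  ∀ x, (f x).map (some ∘ some) ≠ some (g (some (some x)))

theorem forall_withUniquePair_ne_iff (f : β → Option β) (g : Perm (Option (Option β))) :
    (∀ w, withUniquePair f w ≠ some (g w)) ↔
      g none ≠ some none ∧ g (some none) ≠ none ∧ AvoidsLift f g := by
  simp [Option.forall, withUniquePair, AvoidsLift, eq_comm]

theorem forall_withSharedPair_ne_iff (f : β → Option β) (g : Perm (Option (Option β))) :
    (∀ w, withSharedPair f w ≠ some (g w)) ↔
      g none ≠ some none ∧ g (some none) ≠ some none ∧ AvoidsLift f g := by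
  simp [Option.forall, withSharedPair, AvoidsLift, eq_comm]

theorem avoidsLift_swap_mul_iff [DecidableEq β] (f : β → Option β)
    (g : Perm (Option (Option β))) :
    AvoidsLift f (swap none (some none) * g) ↔ AvoidsLift f g := by
  have key (y : β) (w : Option (Option β)) :
      some (some y) = swap none (some none) w ↔ some (some y) = w := by
    rw [eq_comm, swap_apply_eq_iff, swap_apply_of_ne_of_ne (by simp) (by simp), eq_comm]
  simp [AvoidsLift, Option.map_eq_some_iff, key]

theorem avoidsLift_optionCongr_iff (f : β → Option β) (σ : Perm β) :
    AvoidsLift f σ.optionCongr.optionCongr ↔ ∀ x, f x ≠ some (σ x) := by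
  simp [AvoidsLift, Option.map_eq_some_iff]

theorem optionCongr_removeNone_of_apply_none {γ : Type*} [DecidableEq γ] {σ : Perm (Option γ)}
    (h : σ none = none) : (removeNone σ).optionCongr = σ := by
  simp [h, Perm.one_def]

theorem optionCongr_optionCongr_removeNone_removeNone {γ : Type*} [DecidableEq γ]
    {σ : Perm (Option (Option γ))} (ha : σ none = none) (hb : σ (some none) = some none) :
    (removeNone (removeNone σ)).optionCongr.optionCongr = σ := by
  have : removeNone σ none = none :=
    Option.some_injective _ ((removeNone_some σ ⟨none, hb⟩).trans hb)
  rw [optionCongr_removeNone_of_apply_none this, optionCongr_removeNone_of_apply_none ha]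

variable [Fintype β] [DecidableEq β]

instance (f : β → Option β) : DecidablePred (AvoidsLift f) :=
  fun _ => Fintype.decidableForallFintype

theorem card_avoidsLift_swap_new_points (f : β → Option β) :
    #{g : Perm (Option (Option β)) |
        (g none ≠ none ∧ g none ≠ some none) ∧ g (some none) = some none ∧ AvoidsLift f g} =
      #{g : Perm (Option (Option β)) |
        g none ≠ some none ∧ g (some none) = none ∧ AvoidsLift f g} := by
  refine card_nbij' (swap none (some none) * ·) (swap none (some none) * ·) ?_ ?_
    (fun g _ => swap_mul_self_mul _ _ _) (fun g _ => swap_mul_self_mul _ _ _)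
  · intro g hg
    obtain ⟨⟨ha, hb⟩, hbb, hL⟩ := (mem_filter.1 hg).2
    simp only [mem_coe, mem_filter, mem_univ, true_and, Perm.mul_apply, hbb,
      swap_apply_right, avoidsLift_swap_mul_iff, swap_apply_of_ne_of_ne ha hb]
    exact ⟨hb, hL⟩
  · intro g hg
    obtain ⟨hb, hba, hL⟩ := (mem_filter.1 hg).2
    have ha : g none ≠ none := fun h => by simpa using g.injective (h.trans hba.symm)
    simp only [mem_coe, mem_filter, mem_univ, true_and, Perm.mul_apply, hba,
      swap_apply_left, avoidsLift_swap_mul_iff, swap_apply_of_ne_of_ne ha hb]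
    exact ⟨⟨ha, hb⟩, hL⟩

theorem card_avoidsLift_fix_new_points_eq_avoidCard (f : β → Option β) :
    #{g : Perm (Option (Option β)) | g none = none ∧ g (some none) = some none ∧ AvoidsLift f g} =
      avoidCard f := by
  symm
  refine card_nbij' (fun σ => σ.optionCongr.optionCongr) (fun g => removeNone (removeNone g))
    ?_ ?_ (fun σ _ => by simp) ?_
  · intro σ hσ
    simp_all [avoidsLift_optionCongr_iff]
  · intro g hg
    obtain ⟨ha, hb, hL⟩ := (mem_filter.1 hg).2
    rw [← optionCongr_optionCongr_removeNone_removeNone ha hb, avoidsLift_optionCongr_iff] at hL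
    simpa using hL
  · intro g hg
    obtain ⟨ha, hb, -⟩ := (mem_filter.1 hg).2
    exact optionCongr_optionCongr_removeNone_removeNone ha hb

theorem avoidCard_withUniquePair (f : β → Option β) :
    avoidCard (withUniquePair f) = avoidCard (withSharedPair f) + avoidCard f := by
  rw [add_comm, ← card_avoidsLift_fix_new_points_eq_avoidCard f]
  simp only [avoidCard, forall_withUniquePair_ne_iff, forall_withSharedPair_ne_iff]
  rw [card_filter_eq_add_card_filter_and _ fun g : Perm (Option (Option β)) =>
      g (some none) = some none,
    card_filter_eq_add_card_filter_and (fun g : Perm (Option (Option β)) =>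
      (g none ≠ some none ∧ g (some none) ≠ none ∧ AvoidsLift f g) ∧ g (some none) = some none)
      fun g => g none = none,
    card_filter_eq_add_card_filter_and (fun g : Perm (Option (Option β)) =>
      g none ≠ some none ∧ g (some none) ≠ some none ∧ AvoidsLift f g)
      fun g => g (some none) = none, ← add_assoc]
  congr 1
  congr 1
  · congr 1
    refine filter_congr fun g _ => ?_
    aesop
  · refine (congrArg card (filter_congr fun g _ => ?_)).trans
      ((card_avoidsLift_swap_new_points f).trans (congrArg card (filter_congr fun g _ => ?_)))
    · aesop
    · aesop
  · congr 1
    refine filter_congr fun g _ => ?_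
    aesop

@[simp] theorem fiberCard_withUniquePair_some_some (f : β → Option β) (y : β) :
    fiberCard (withUniquePair f) (some (some y)) = fiberCard f y := by
  rw [fiberCard, card_filter_option_option]
  simp [withUniquePair, Option.map_eq_some_iff, fiberCard]

@[simp] theorem fiberCard_withSharedPair_some_some (f : β → Option β) (y : β) :
    fiberCard (withSharedPair f) (some (some y)) = fiberCard f y := by
  rw [fiberCard, card_filter_option_option]
  simp [withSharedPair, Option.map_eq_some_iff, fiberCard]

theorem multCount_option_option {F : Option (Option β) → Option (Option (Option β))}
    {f : β → Option β} (hF : ∀ y, fiberCard F (some (some y)) = fiberCard f y) (k : ℕ) :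
    multCount F k = (if fiberCard F none = k then 1 else 0) +
      (if fiberCard F (some none) = k then 1 else 0) + multCount f k := by
  rw [multCount, card_filter_option_option]
  simp only [hF]
  rfl

theorem isTwoMaxProfile_withUniquePair {f : β → Option β} {A B C : ℕ}
    (h : IsTwoMaxProfile f A B C) : IsTwoMaxProfile (withUniquePair f) A (B + 2) C := by
  have ha : fiberCard (withUniquePair f) none = 1 := by
    rw [fiberCard, card_filter_option_option]
    simp [withUniquePair, Option.map_eq_some_iff]
  have hb : fiberCard (withUniquePair f) (some none) = 1 := by
    rw [fiberCard, card_filter_option_option]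
    simp [withUniquePair, Option.map_eq_some_iff]
  have hmult := multCount_option_option (fiberCard_withUniquePair_some_some f)
  refine ⟨by simp [Option.forall, ha, hb, h.fiberCard_le_two], ?_, ?_, ?_⟩
  · simp [hmult, ha, hb, h.two_mul_multCount_two]
  · simp [hmult, ha, hb, h.multCount_one, add_comm]
  · rw [noneCount, card_filter_option_option]
    simpa [withUniquePair, noneCount] using h.noneCount_eq

theorem isTwoMaxProfile_withSharedPair {f : β → Option β} {A B C : ℕ}
    (h : IsTwoMaxProfile f A B C) : IsTwoMaxProfile (withSharedPair f) (A + 2) B C := by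
  have ha : fiberCard (withSharedPair f) none = 0 := by
    rw [fiberCard, card_filter_option_option]
    simp [withSharedPair, Option.map_eq_some_iff]
  have hb : fiberCard (withSharedPair f) (some none) = 2 := by
    rw [fiberCard, card_filter_option_option]
    simp [withSharedPair, Option.map_eq_some_iff]
  have hmult := multCount_option_option (fiberCard_withSharedPair_some_some f)
  refine ⟨by simp [Option.forall, ha, hb, h.fiberCard_le_two], ?_, ?_, ?_⟩
  · simp [hmult, ha, hb, ← h.two_mul_multCount_two]
    ring
  · simp [hmult, ha, hb, h.multCount_one]
  · rw [noneCount, card_filter_option_option]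
    simpa [withSharedPair, noneCount] using h.noneCount_eq

end Extension

/-- Recursion Formula 2: if B ≥ 2, then D[A,B,C] = D[A+2,B-2,C] + D[A,B-2,C]. -/
theorem stmt_7 (A B C : ℕ) (hB : 2 ≤ B)
    (f : Fin (A + B + C) → Option (Fin (A + B + C)))
    (f₁ : Fin (A + B + C) → Option (Fin (A + B + C)))
    (f₂ : Fin (A + (B - 2) + C) → Option (Fin (A + (B - 2) + C)))
    (hf : TwoMaxParams f A B C)
    (hf₁ : TwoMaxParams f₁ (A + 2) (B - 2) C)
    (hf₂ : TwoMaxParams f₂ A (B - 2) C) :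
    avoidCount f = avoidCount f₁ + avoidCount f₂ := by
  have hcard : Fintype.card (Fin (A + B + C)) =
      Fintype.card (Option (Option (Fin (A + (B - 2) + C)))) := by
    simp only [Fintype.card_fin, Fintype.card_option]
    omega
  have hprofile := hf₂.isTwoMaxProfile
  have hunique := isTwoMaxProfile_withUniquePair hprofile
  rw [Nat.sub_add_cancel hB] at hunique
  rw [avoidCount_eq_avoidCard, avoidCount_eq_avoidCard, avoidCount_eq_avoidCard,
    hf.isTwoMaxProfile.avoidCard_eq hunique hcard,
    hf₁.isTwoMaxProfile.avoidCard_eq (isTwoMaxProfile_withSharedPair hprofile) hcard,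
    avoidCard_withUniquePair]
end

section
/- With D[A,B,C] as the number of f-derangements of a 2-max partial function with parameters A, B, C on n = A+B+C elements, if A > 0 and B > 0 then D[A,B,C] = (C + A/2)·D[A,B-1,C] + (B-1)·D[A,B-2,C+1] + (A/2)·D[A-2,B-1,C+2]. -/
/-!
`avoidCount f` depends only on `(A, B, C)`: two 2-max partial functions with the same parameters
have the same number of values with two, one and no preimages and the same number of undefined
positions, so one is obtained from the other by relabelling positions and values, which does not
change the count.

Put an element with unique image `y₀` at position `0` and expand along it
(`Equiv.Perm.decomposeFin`): the permutations with `g 0 = v ≠ y₀` correspond to the permutations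
avoiding the minor in which position `0` and value `v` are deleted. This minor has parameters
`(A, B - 1, C)`, `(A, B - 2, C + 1)` or `(A - 2, B - 1, C + 2)` according as `v` has no, one or
two preimages, and there are `C + A / 2`, `B - 1` and `A / 2` such values `v`.
-/

open Finset

section Fiber

variable {α β : Type*} [Fintype α] [DecidableEq β]

def fiber (f : α → Option β) (y : β) : Finset α := {i | f i = some y}

@[simp]
lemma mem_fiber {f : α → Option β} {y : β} {i : α} : i ∈ fiber f y ↔ f i = some y := by
  simp [fiber]

def valuesOfMult [Fintype β] (f : α → Option β) (k : ℕ) : Finset β := {y | #(fiber f y) = k}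

@[simp]
lemma mem_valuesOfMult [Fintype β] {f : α → Option β} {k : ℕ} {y : β} :
    y ∈ valuesOfMult f k ↔ #(fiber f y) = k := by
  simp [valuesOfMult]

lemma card_biUnion_fiber_valuesOfMult [DecidableEq α] [Fintype β] (f : α → Option β)
    (k : ℕ) :
    #((valuesOfMult f k).biUnion (fiber f)) = k * #(valuesOfMult f k) := by
  have hdisj : (valuesOfMult f k : Set β).PairwiseDisjoint (fiber f) := by
    intro y _ y' _ hne
    simp only [Function.onFun, disjoint_left, mem_fiber]
    intro i hy hy'
    exact hne (Option.some.inj (hy.symm.trans hy'))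
  rw [card_biUnion hdisj, sum_const_nat fun y hy => mem_valuesOfMult.1 hy, mul_comm]

lemma one_lt_card_fiber_iff {f : α → Option β} {i : α} {y : β} (hi : f i = some y) :
    1 < #(fiber f y) ↔ ∃ j, j ≠ i ∧ f j = some y := by
  constructor
  · intro h
    obtain ⟨j, hj, hji⟩ := exists_mem_ne h i
    exact ⟨j, hji, mem_fiber.1 hj⟩
  · rintro ⟨j, hji, hj⟩
    exact one_lt_card.2 ⟨j, mem_fiber.2 hj, i, mem_fiber.2 hi, hji⟩

lemma card_valuesOfMult_add [Fintype β] {f : α → Option β} (hmax : ∀ y, #(fiber f y) ≤ 2) :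
    #(valuesOfMult f 0) + #(valuesOfMult f 1) + #(valuesOfMult f 2) = Fintype.card β := by
  rw [← card_univ, card_eq_sum_card_fiberwise (s := univ) (f := fun y => #(fiber f y))
    (t := range 3) fun y _ => mem_range.2 (Nat.lt_succ_of_le (hmax y))]
  simp only [sum_range_succ, sum_range_zero, zero_add]
  rfl

lemma valuesOfMult_eq_empty [Fintype β] {f : α → Option β} (hmax : ∀ y, #(fiber f y) ≤ 2)
    {k : ℕ} (hk : 2 < k) : valuesOfMult f k = ∅ :=
  filter_eq_empty_iff.2 fun y _ => by have hy := hmax y; omega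

lemma card_fiber_comp (f : α → Option β) (σ : Equiv.Perm α) (y : β) :
    #(fiber (f ∘ σ) y) = #(fiber f y) :=
  card_equiv σ fun _ => by simp

end Fiber

lemma twoMaxParams_iff {n A B C : ℕ} {f : Fin n → Option (Fin n)} :
    TwoMaxParams f A B C ↔ (∀ y, #(fiber f y) ≤ 2) ∧ A = 2 * #(valuesOfMult f 2) ∧
      B = #(valuesOfMult f 1) ∧ C = #{i | f i = none} := by
  refine and_congr_right fun hmax => ?_
  have hshared : ({i | f i ≠ none ∧ ∃ j, j ≠ i ∧ f j = f i} : Finset (Fin n)) =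
      (valuesOfMult f 2).biUnion (fiber f) := by
    ext i
    simp only [mem_filter, mem_univ, true_and, mem_biUnion, mem_valuesOfMult, mem_fiber]
    cases hi : f i with
    | none => simp
    | some y =>
      have hy : #(fiber f y) ≤ 2 := hmax y
      simp only [ne_eq, reduceCtorEq, not_false_eq_true, true_and, Option.some.injEq,
        exists_eq_right', ← one_lt_card_fiber_iff hi]
      omega
  have hunique : ({i | f i ≠ none ∧ ∀ j, j ≠ i → f j ≠ f i} : Finset (Fin n)) =
      (valuesOfMult f 1).biUnion (fiber f) := by
    ext i
    simp only [mem_filter, mem_univ, true_and, mem_biUnion, mem_valuesOfMult, mem_fiber]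
    cases hi : f i with
    | none => simp
    | some y =>
      have hpos := card_pos.2 ⟨i, mem_fiber.2 hi⟩
      have key : (∃ j, j ≠ i ∧ f j = some y) ↔ #(fiber f y) ≠ 1 := by
        rw [← one_lt_card_fiber_iff hi]; omega
      simpa using key.not
  rw [hshared, hunique, card_biUnion_fiber_valuesOfMult, card_biUnion_fiber_valuesOfMult,
    one_mul]

theorem TwoMaxParams.card_eq {n A B C : ℕ} {f : Fin n → Option (Fin n)}
    (hf : TwoMaxParams f A B C) : n = A + B + C := by
  obtain ⟨-, rfl, rfl, rfl⟩ := hf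
  have hdef := card_filter_add_card_filter_not (s := univ.filter fun i : Fin n => f i ≠ none)
    (fun i => ∃ j, j ≠ i ∧ f j = f i)
  have htot := card_filter_add_card_filter_not (s := (univ : Finset (Fin n))) (f · ≠ none)
  simp only [filter_filter, not_exists, not_and, not_not, ne_eq, card_univ, Fintype.card_fin]
    at hdef htot ⊢
  omega

lemma exists_equiv_apply_eq_of_card_fiber_eq {α β γ : Type*} [Fintype α] [Fintype β]
    [DecidableEq γ] {p : α → γ} {q : β → γ} (h : ∀ c, #{a | p a = c} = #{b | q b = c}) :
    ∃ e : α ≃ β, ∀ a, q (e a) = p a :=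
  ⟨.ofFiberEquiv fun c => Fintype.equivOfCardEq (by simpa [Fintype.card_subtype] using h c),
    Equiv.ofFiberEquiv_map _⟩

lemma avoidCount_comp {n : ℕ} (f : Fin n → Option (Fin n)) (σ : Equiv.Perm (Fin n)) :
    avoidCount (f ∘ σ) = avoidCount f := by
  refine card_equiv (Equiv.mulRight σ⁻¹) fun g => ?_
  simp only [mem_filter, mem_univ, true_and, Function.comp_apply, Equiv.coe_mulRight,
    Equiv.Perm.coe_mul]
  rw [σ.forall_congr_left]
  simp

lemma avoidCount_map {n : ℕ} (f : Fin n → Option (Fin n)) (τ : Equiv.Perm (Fin n)) :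
    avoidCount (fun i => (f i).map τ) = avoidCount f := by
  refine card_equiv (Equiv.mulLeft τ⁻¹) fun g => ?_
  simp [Option.map_eq_some_iff, ← Equiv.eq_symm_apply]

lemma TwoMaxParams.comp {n A B C : ℕ} {f : Fin n → Option (Fin n)} (hf : TwoMaxParams f A B C)
    (σ : Equiv.Perm (Fin n)) : TwoMaxParams (f ∘ σ) A B C := by
  obtain ⟨hmax, rfl, rfl, rfl⟩ := twoMaxParams_iff.1 hf
  have hvalues : ∀ k, valuesOfMult (f ∘ σ) k = valuesOfMult f k := fun k => by
    ext; simp [card_fiber_comp]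
  exact twoMaxParams_iff.2 ⟨fun y => (card_fiber_comp f σ y).trans_le (hmax y), by rw [hvalues],
    by rw [hvalues], (card_equiv σ fun _ => by simp).symm⟩

theorem TwoMaxParams.avoidCount_eq {m n A B C : ℕ} {f : Fin m → Option (Fin m)}
    {f' : Fin n → Option (Fin n)} (hf : TwoMaxParams f A B C) (hf' : TwoMaxParams f' A B C) :
    avoidCount f = avoidCount f' := by
  obtain rfl : m = n := hf.card_eq.trans hf'.card_eq.symm
  obtain ⟨hmax, hA, hB, hC⟩ := twoMaxParams_iff.1 hf
  obtain ⟨hmax', hA', hB', hC'⟩ := twoMaxParams_iff.1 hf'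
  have hmult : ∀ k, #(valuesOfMult f k) = #(valuesOfMult f' k) := by
    have h := card_valuesOfMult_add hmax
    have h' := card_valuesOfMult_add hmax'
    intro k
    match k with
    | 0 | 1 | 2 => omega
    | k + 3 => rw [valuesOfMult_eq_empty hmax (by omega), valuesOfMult_eq_empty hmax' (by omega)]
  obtain ⟨τ, hτ⟩ := exists_equiv_apply_eq_of_card_fiber_eq
    (p := fun y => #(fiber f y)) (q := fun y => #(fiber f' y)) hmult
  obtain ⟨σ, hσ⟩ := exists_equiv_apply_eq_of_card_fiber_eq
    (p := fun i => (f i).map τ) (q := f') <| by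
      rintro (_ | z)
      · simpa using hC.symm.trans hC'
      · have hfib : ({i | (f i).map τ = some z} : Finset (Fin m)) = fiber f (τ.symm z) := by
          ext; simp [Option.map_eq_some_iff, ← Equiv.eq_symm_apply]
        rw [hfib, ← hτ, Equiv.apply_symm_apply]
        rfl
  rw [← avoidCount_map f τ, ← funext hσ, ← Function.comp_def, avoidCount_comp]

section Minor

variable {n : ℕ}

def swapSucc (v : Fin (n + 1)) (z : Fin n) : Fin (n + 1) := Equiv.swap 0 v z.succ

lemma swapSucc_injective (v : Fin (n + 1)) : Function.Injective (swapSucc v) :=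
  (Equiv.swap 0 v).injective.comp (Fin.succ_injective n)

lemma exists_swapSucc_eq_iff {v y : Fin (n + 1)} : (∃ z, swapSucc v z = y) ↔ y ≠ v := by
  simp [swapSucc, ← Equiv.eq_symm_apply, Fin.exists_succ_eq]

/-- The minor of `f` obtained by deleting position `0` and value `v`; the remaining values are
identified with `Fin n` through `swapSucc v`, as in `Equiv.Perm.decomposeFin`. -/
noncomputable def minor (f : Fin (n + 1) → Option (Fin (n + 1))) (v : Fin (n + 1)) :
    Fin n → Option (Fin n) :=
  fun j => (f j.succ).bind (Function.partialInv (swapSucc v))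

variable {f : Fin (n + 1) → Option (Fin (n + 1))} {v : Fin (n + 1)}

lemma minor_eq_some {j z : Fin n} : minor f v j = some z ↔ f j.succ = some (swapSucc v z) := by
  simp [minor, Option.bind_eq_some_iff, (swapSucc_injective v).isPartialInv _ _]

lemma minor_eq_none {j : Fin n} : minor f v j = none ↔ f j.succ = none ∨ f j.succ = some v := by
  rw [Option.eq_none_iff_forall_ne_some]
  simp only [ne_eq, minor_eq_some]
  cases f j.succ with
  | none => simp
  | some y => simpa [not_exists, eq_comm] using exists_swapSucc_eq_iff.not

lemma avoids_decomposeFin_symm_iff (e : Equiv.Perm (Fin n)) :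
    (∀ i, f i ≠ some (Equiv.Perm.decomposeFin.symm (v, e) i)) ↔
      f 0 ≠ some v ∧ ∀ j, minor f v j ≠ some (e j) := by
  simp [Fin.forall_fin_succ, minor_eq_some, swapSucc]

lemma avoidCount_eq_sum_minor {y₀ : Fin (n + 1)} (h₀ : f 0 = some y₀) :
    avoidCount f = ∑ v ∈ univ.erase y₀, avoidCount (minor f v) := by
  calc avoidCount f
      = #{p : Fin (n + 1) × Equiv.Perm (Fin n) | f 0 ≠ some p.1 ∧
          ∀ j, minor f p.1 j ≠ some (p.2 j)} :=
        (card_equiv Equiv.Perm.decomposeFin.symm fun p => by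
          simp [avoids_decomposeFin_symm_iff]).symm
    _ = ∑ v ∈ univ.erase y₀, avoidCount (minor f v) := by
        have herase : univ.erase y₀ = ({v | f 0 ≠ some v} : Finset (Fin (n + 1))) := by
          ext; simp [h₀, eq_comm]
        rw [card_filter, Fintype.sum_prod_type, herase, sum_filter]
        refine sum_congr rfl fun v _ => ?_
        split_ifs with hv <;> simp [hv, avoidCount]

lemma card_fiber_eq_ite_add_card_fiber_minor (z : Fin n) :
    #(fiber f (swapSucc v z)) =
      (if f 0 = some (swapSucc v z) then 1 else 0) + #(fiber (minor f v) z) := by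
  simp only [fiber, Fin.card_filter_univ_succ', minor_eq_some]

lemma card_fiber_minor_le (z : Fin n) : #(fiber (minor f v) z) ≤ #(fiber f (swapSucc v z)) := by
  rw [card_fiber_eq_ite_add_card_fiber_minor]
  omega

variable {y₀ : Fin (n + 1)}

lemma card_filter_minor_eq_none (h₀ : f 0 = some y₀) (hv : v ≠ y₀) :
    #{j | minor f v j = none} = #{i | f i = none} + #(fiber f v) := by
  have hdisj : Disjoint ({i | f i = none} : Finset (Fin (n + 1))) (fiber f v) :=
    disjoint_filter.2 fun i _ hi => by simp [hi]
  rw [← card_union_of_disjoint hdisj, fiber, ← filter_or, Fin.card_filter_univ_succ']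
  simp [h₀, hv.symm, minor_eq_none]

lemma card_valuesOfMult_minor {k : ℕ} (hk : k ≠ 0) (h₀ : f 0 = some y₀)
    (hy₀ : #(fiber f y₀) = 1) :
    #(valuesOfMult (minor f v) k) = #(((valuesOfMult f k).erase v).erase y₀) := by
  rw [← card_map ⟨swapSucc v, swapSucc_injective v⟩]
  congr 1
  ext y
  simp only [mem_map, mem_valuesOfMult, Function.Embedding.coeFn_mk, mem_erase]
  constructor
  · rintro ⟨z, hz, rfl⟩
    have hcard := card_fiber_eq_ite_add_card_fiber_minor (f := f) (v := v) z
    have hne : swapSucc v z ≠ y₀ := by rintro h; rw [h, if_pos h₀, hy₀] at hcard; omega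
    refine ⟨hne, exists_swapSucc_eq_iff.1 ⟨z, rfl⟩, ?_⟩
    simpa [h₀, Ne.symm hne, hz] using hcard
  · rintro ⟨hy₀', hv, hy⟩
    obtain ⟨z, rfl⟩ := exists_swapSucc_eq_iff.2 hv
    have hcard := card_fiber_eq_ite_add_card_fiber_minor (f := f) (v := v) z
    refine ⟨z, ?_, rfl⟩
    simp [h₀, Ne.symm hy₀'] at hcard
    omega

variable {A B C : ℕ}

lemma twoMaxParams_minor_of_card_fiber_eq_zero (hf : TwoMaxParams f A B C)
    (h₀ : f 0 = some y₀) (hy₀ : #(fiber f y₀) = 1) (hv : #(fiber f v) = 0) :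
    TwoMaxParams (minor f v) A (B - 1) C := by
  have hvy : v ≠ y₀ := by rintro rfl; omega
  obtain ⟨hmax, rfl, rfl, rfl⟩ := twoMaxParams_iff.1 hf
  refine twoMaxParams_iff.2 ⟨fun z => (card_fiber_minor_le z).trans (hmax _), ?_, ?_, ?_⟩
  · simp [card_valuesOfMult_minor two_ne_zero h₀ hy₀, erase_eq_of_notMem, hv, hy₀]
  · simp [card_valuesOfMult_minor one_ne_zero h₀ hy₀, erase_eq_of_notMem, hv, hy₀,
      card_erase_of_mem]
  · rw [card_filter_minor_eq_none h₀ hvy, hv, add_zero]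

lemma twoMaxParams_minor_of_card_fiber_eq_one (hf : TwoMaxParams f A B C)
    (h₀ : f 0 = some y₀) (hy₀ : #(fiber f y₀) = 1) (hvy : v ≠ y₀)
    (hv : #(fiber f v) = 1) :
    TwoMaxParams (minor f v) A (B - 2) (C + 1) := by
  obtain ⟨hmax, rfl, rfl, rfl⟩ := twoMaxParams_iff.1 hf
  refine twoMaxParams_iff.2 ⟨fun z => (card_fiber_minor_le z).trans (hmax _), ?_, ?_, ?_⟩
  · simp [card_valuesOfMult_minor two_ne_zero h₀ hy₀, erase_eq_of_notMem, hv, hy₀]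
  · simp [card_valuesOfMult_minor one_ne_zero h₀ hy₀, hv, hy₀, card_erase_of_mem, hvy.symm]
    omega
  · rw [card_filter_minor_eq_none h₀ hvy, hv]

lemma twoMaxParams_minor_of_card_fiber_eq_two (hf : TwoMaxParams f A B C)
    (h₀ : f 0 = some y₀) (hy₀ : #(fiber f y₀) = 1) (hv : #(fiber f v) = 2) :
    TwoMaxParams (minor f v) (A - 2) (B - 1) (C + 2) := by
  have hvy : v ≠ y₀ := by rintro rfl; omega
  obtain ⟨hmax, rfl, rfl, rfl⟩ := twoMaxParams_iff.1 hf
  refine twoMaxParams_iff.2 ⟨fun z => (card_fiber_minor_le z).trans (hmax _), ?_, ?_, ?_⟩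
  · simp [card_valuesOfMult_minor two_ne_zero h₀ hy₀, erase_eq_of_notMem, hv, hy₀,
      card_erase_of_mem]
    omega
  · simp [card_valuesOfMult_minor one_ne_zero h₀ hy₀, erase_eq_of_notMem, hv, hy₀,
      card_erase_of_mem]
  · rw [card_filter_minor_eq_none h₀ hvy, hv]

end Minor

lemma TwoMaxParams.exists_unique_image_at_zero {m A B C : ℕ} {f : Fin m → Option (Fin m)}
    (hf : TwoMaxParams f A B C) (hB : 0 < B) :
    ∃ (n : ℕ) (F : Fin (n + 1) → Option (Fin (n + 1))) (y₀ : Fin (n + 1)),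
      TwoMaxParams F A B C ∧ F 0 = some y₀ ∧ #(fiber F y₀) = 1 := by
  obtain ⟨-, -, rfl, -⟩ := twoMaxParams_iff.1 hf
  obtain ⟨y₀, hy₀⟩ := card_pos.1 hB
  obtain ⟨b, hb⟩ := card_eq_one.1 (mem_valuesOfMult.1 hy₀)
  obtain ⟨n, rfl⟩ := Nat.exists_eq_add_one.2 b.pos
  refine ⟨n, f ∘ Equiv.swap 0 b, y₀, hf.comp _, ?_, ?_⟩
  · simpa using mem_fiber.1 (hb ▸ mem_singleton_self b)
  · rw [card_fiber_comp, hb, card_singleton]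

lemma sum_erase_eq_sum_valuesOfMult {α β M : Type*} [Fintype α] [Fintype β] [DecidableEq β]
    [AddCancelCommMonoid M] {f : α → Option β} (hmax : ∀ y, #(fiber f y) ≤ 2) {y₀ : β}
    (hy₀ : y₀ ∈ valuesOfMult f 1) (g : β → M) :
    ∑ v ∈ univ.erase y₀, g v =
      ∑ v ∈ valuesOfMult f 0, g v + ∑ v ∈ (valuesOfMult f 1).erase y₀, g v +
        ∑ v ∈ valuesOfMult f 2, g v := by
  have hsplit : ∑ v ∈ valuesOfMult f 0, g v + ∑ v ∈ valuesOfMult f 1, g v +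
      ∑ v ∈ valuesOfMult f 2, g v = ∑ v, g v := by
    have := sum_fiberwise_of_maps_to (s := univ) (t := range 3) (g := fun y => #(fiber f y))
      (fun y _ => mem_range.2 (Nat.lt_succ_of_le (hmax y))) g
    simp only [sum_range_succ, sum_range_zero, zero_add] at this
    exact this
  rw [← add_sum_erase _ _ (mem_univ y₀), ← add_sum_erase _ _ hy₀] at hsplit
  rw [← add_right_inj (g y₀), ← hsplit]
  abel

theorem stmt_8_general (A B C : ℕ) (hB : 0 < B)
    (f : Fin (A + B + C) → Option (Fin (A + B + C)))
    (f₁ : Fin (A + (B - 1) + C) → Option (Fin (A + (B - 1) + C)))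
    (f₂ : Fin (A + (B - 2) + (C + 1)) → Option (Fin (A + (B - 2) + (C + 1))))
    (f₃ : Fin ((A - 2) + (B - 1) + (C + 2)) → Option (Fin ((A - 2) + (B - 1) + (C + 2))))
    (hf : TwoMaxParams f A B C)
    (hf₁ : TwoMaxParams f₁ A (B - 1) C)
    (hf₂ : TwoMaxParams f₂ A (B - 2) (C + 1))
    (hf₃ : TwoMaxParams f₃ (A - 2) (B - 1) (C + 2)) :
    avoidCount f = (C + A / 2) * avoidCount f₁ + (B - 1) * avoidCount f₂
      + (A / 2) * avoidCount f₃ := by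
  obtain ⟨n, F, y₀, hF, h₀, hy₀⟩ := hf.exists_unique_image_at_zero hB
  have hy₀' : y₀ ∈ valuesOfMult F 1 := mem_valuesOfMult.2 hy₀
  have h₁ : ∀ v ∈ valuesOfMult F 0, avoidCount (minor F v) = avoidCount f₁ := fun v hv =>
    (twoMaxParams_minor_of_card_fiber_eq_zero hF h₀ hy₀ (mem_valuesOfMult.1 hv)).avoidCount_eq
      hf₁
  have h₂ : ∀ v ∈ (valuesOfMult F 1).erase y₀, avoidCount (minor F v) = avoidCount f₂ :=
    fun v hv => (twoMaxParams_minor_of_card_fiber_eq_one hF h₀ hy₀ (mem_erase.1 hv).1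
      (mem_valuesOfMult.1 (mem_erase.1 hv).2)).avoidCount_eq hf₂
  have h₃ : ∀ v ∈ valuesOfMult F 2, avoidCount (minor F v) = avoidCount f₃ := fun v hv =>
    (twoMaxParams_minor_of_card_fiber_eq_two hF h₀ hy₀ (mem_valuesOfMult.1 hv)).avoidCount_eq
      hf₃
  obtain ⟨hmax, hA, hB', -⟩ := twoMaxParams_iff.1 hF
  have hcard₀ : #(valuesOfMult F 0) = C + A / 2 := by
    have hsum := card_valuesOfMult_add hmax
    rw [Fintype.card_fin] at hsum
    have := hF.card_eq
    omega
  have hcard₂ : #(valuesOfMult F 2) = A / 2 := by omega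
  rw [hf.avoidCount_eq hF, avoidCount_eq_sum_minor h₀, sum_erase_eq_sum_valuesOfMult hmax hy₀',
    sum_congr rfl h₁, sum_congr rfl h₂, sum_congr rfl h₃, sum_const, sum_const, sum_const,
    card_erase_of_mem hy₀', hcard₀, ← hB', hcard₂]
  simp only [smul_eq_mul]

/-- Recursion Formula 1: if A, B > 0 then
D[A,B,C] = (C + A/2)·D[A,B-1,C] + (B-1)·D[A,B-2,C+1] + (A/2)·D[A-2,B-1,C+2]. -/
theorem stmt_8 (A B C : ℕ) (hA : 0 < A) (hB : 0 < B)
    (f : Fin (A + B + C) → Option (Fin (A + B + C)))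
    (f₁ : Fin (A + (B - 1) + C) → Option (Fin (A + (B - 1) + C)))
    (f₂ : Fin (A + (B - 2) + (C + 1)) → Option (Fin (A + (B - 2) + (C + 1))))
    (f₃ : Fin ((A - 2) + (B - 1) + (C + 2)) → Option (Fin ((A - 2) + (B - 1) + (C + 2))))
    (hf : TwoMaxParams f A B C)
    (hf₁ : TwoMaxParams f₁ A (B - 1) C)
    (hf₂ : TwoMaxParams f₂ A (B - 2) (C + 1))
    (hf₃ : TwoMaxParams f₃ (A - 2) (B - 1) (C + 2)) :
    avoidCount f = (C + A / 2) * avoidCount f₁ + (B - 1) * avoidCount f₂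
      + (A / 2) * avoidCount f₃ :=
  stmt_8_general A B C hB f f₁ f₂ f₃ hf hf₁ hf₂ hf₃
end

section
/- Let f, f*: {1,...,n} → {1,...,n} be identical except that f(i) = 1 for i = 1,...,r (r ≥ 2), no element maps to 2 under f, and f*(r) = 2 (with f*(i) = f(i) for i ≠ r). Then D[f] ≤ D[f*], where D[h] denotes the number of permutations g with g(i) ≠ h(i) for all i. -/
/-!
Compose every `f`-derangement `g` with `g p = b` with the transposition `(f p b)`. The result sends
`p` to `f p ≠ b` and the old preimage of `f p` to `b`, which is not a value of `f`; so it avoids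
`f` redirected at `p` to `b`. Derangements with `g p ≠ b` avoid the redirected map already, and the
two families cannot collide, because only the first kind of image sends `p` to `f p`.
-/

open Equiv Finset Function

variable {α : Type*} [Fintype α] [DecidableEq α]

def avoidingPerms (h : α → α) : Finset (Perm α) :=
  univ.filter fun g => ∀ i, g i ≠ h i

@[simp]
lemma mem_avoidingPerms {h : α → α} {g : Perm α} : g ∈ avoidingPerms h ↔ ∀ i, g i ≠ h i := by
  simp [avoidingPerms]

section Redirect

variable {f : α → α} {p b : α} {g : Perm α}

lemma mem_avoidingPerms_update (hg : g ∈ avoidingPerms f) (hgp : g p ≠ b) :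
    g ∈ avoidingPerms (update f p b) := by
  rw [mem_avoidingPerms] at hg ⊢
  intro i
  rcases eq_or_ne i p with rfl | hip
  · simpa using hgp
  · simpa [update_of_ne hip] using hg i

lemma swap_mul_mem_avoidingPerms_update (hb : ∀ i, f i ≠ b) (hg : g ∈ avoidingPerms f)
    (hgp : g p = b) : swap (f p) b * g ∈ avoidingPerms (update f p b) := by
  rw [mem_avoidingPerms] at hg ⊢
  intro i
  rcases eq_or_ne i p with rfl | hip
  · simpa [hgp] using hb i
  · have hgi : g i ≠ b := fun h => hip (g.injective (h.trans hgp.symm))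
    rw [update_of_ne hip, Perm.mul_apply]
    rcases eq_or_ne (g i) (f p) with hgi' | hgi'
    · rw [hgi', swap_apply_left]
      exact (hb i).symm
    · rw [swap_apply_of_ne_of_ne hgi' hgi]
      exact hg i

theorem card_avoidingPerms_le_update (hb : ∀ i, f i ≠ b) :
    #(avoidingPerms f) ≤ #(avoidingPerms (update f p b)) := by
  let redirect : Perm α → Perm α := fun g => if g p = b then swap (f p) b * g else g
  have redirect_apply_eq_iff {g : Perm α} (hg : g ∈ avoidingPerms f) :
      redirect g p = f p ↔ g p = b := by
    by_cases hgp : g p = b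
    · simp [redirect, hgp]
    · simpa [redirect, hgp] using mem_avoidingPerms.1 hg p
  refine card_le_card_of_injOn redirect (fun g hg => ?_) (fun g₁ hg₁ g₂ hg₂ heq => ?_)
  · by_cases hgp : g p = b
    · simpa [redirect, hgp] using swap_mul_mem_avoidingPerms_update hb hg hgp
    · simpa [redirect, hgp] using mem_avoidingPerms_update hg hgp
  · have h : g₁ p = b ↔ g₂ p = b := by
      rw [← redirect_apply_eq_iff hg₁, ← redirect_apply_eq_iff hg₂, heq]
    by_cases h₁ : g₁ p = b
    · simpa [redirect, h₁, h.1 h₁] using heq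
    · simpa [redirect, h₁, mt h.2 h₁] using heq

end Redirect

/-- Lemma (*): if f, f* agree except that f(i) = 1 for i = 1,...,r (r ≥ 2), no
element maps to 2 under f, and f*(r) = 2, then D[f] ≤ D[f*]. -/
theorem stmt_11 (n r : ℕ) (hn : 2 ≤ n) (hrn : r ≤ n)
    (f fstar : Fin n → Fin n)
    (hf2 : ∀ i : Fin n, f i ≠ ⟨1, by omega⟩)
    (hstar1 : fstar ⟨r - 1, by omega⟩ = ⟨1, by omega⟩)
    (hstar2 : ∀ i : Fin n, i.val ≠ r - 1 → fstar i = f i) :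
    (Finset.univ.filter fun g : Equiv.Perm (Fin n) => ∀ i, g i ≠ f i).card
      ≤ (Finset.univ.filter fun g : Equiv.Perm (Fin n) => ∀ i, g i ≠ fstar i).card := by
  have hfstar : fstar = update f ⟨r - 1, by omega⟩ ⟨1, by omega⟩ := by
    funext i
    rcases eq_or_ne i ⟨r - 1, by omega⟩ with rfl | hi
    · simpa using hstar1
    · rw [update_of_ne hi, hstar2 i fun h => hi (Fin.ext h)]
  rw [hfstar]
  -- The filters above decide `∀ i` by `Nat.decidableForallFin`, not as in `avoidingPerms`.
  convert card_avoidingPerms_le_update (p := ⟨r - 1, by omega⟩) hf2 using 2 <;> ext <;> simp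
end

section
/- For every sequence of 2-max functions f_n: {1,...,n} → {1,...,n}, the fraction D[f_n]/n! of permutations that are f_n-derangements converges to 1/e as n → ∞. -/
/-!
Inclusion–exclusion over the set `S` of positions where `g` agrees with `f` gives
`D[f] = ∑ (-1)^|S| (n - |S|)!`, the sum running over the sets `S` on which `f` is injective
(elsewhere no permutation agrees with `f`); for `f = id` it runs over all `S` and gives `D(n)`.
So `D[f] - D(n)` is a signed sum over the sets on which `f` is not injective. Each of them
contains a collision pair `i ≠ j`, `f i = f j`; if every fibre of `f` has at most `k` points
there are at most `n (k - 1)` such ordered pairs, and the sets containing a fixed pair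
contribute at most `∑_m C(n-2, m) (n-2-m)! ≤ e (n-2)!`. Hence
`|D[f] - D(n)| ≤ e n (k - 1) (n-2)! = o(n!)`, and `D(n)/n! → 1/e`.
-/

open Filter Finset Real
open scoped Nat

namespace Equiv.Perm

variable {α : Type*} [Fintype α] [DecidableEq α]

theorem card_filter_forall_mem_apply_eq_self (S : Finset α) :
    #{g : Perm α | ∀ i ∈ S, g i = i} = (Fintype.card α - #S)! := by
  have e : {g : Perm α // ∀ i ∈ S, g i = i} ≃ Perm {i // i ∉ S} :=
    ((Perm.subtypeEquivSubtypePerm (· ∉ S)).trans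
      (Equiv.subtypeEquivRight fun g => by simp only [not_not])).symm
  rw [← Fintype.card_subtype, Fintype.card_congr e, Fintype.card_perm,
    Fintype.card_subtype_compl, Fintype.card_coe]

theorem card_filter_forall_mem_apply_eq_of_injOn {f : α → α} {S : Finset α}
    (hf : Set.InjOn f S) :
    #{g : Perm α | ∀ i ∈ S, g i = f i} = (Fintype.card α - #S)! := by
  obtain ⟨g₀, hg₀⟩ := exists_extending_pair (fun i : S => (i : α)) (fun i : S => f i)
    Subtype.val_injective hf.injective
  rw [← card_filter_forall_mem_apply_eq_self S]
  refine card_equiv (Equiv.mulLeft g₀⁻¹) fun g => ?_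
  simp only [mem_filter, mem_univ, true_and, coe_mulLeft, mul_apply]
  exact forall₂_congr fun i hi => by rw [inv_eq_iff_eq, ← hg₀ ⟨i, hi⟩]

theorem card_filter_forall_mem_apply_eq_of_not_injOn {f : α → α} {S : Finset α}
    (hf : ¬ Set.InjOn f S) : #{g : Perm α | ∀ i ∈ S, g i = f i} = 0 := by
  refine card_eq_zero.2 (filter_eq_empty_iff.2 fun g _ hg => hf fun i hi j hj hij => ?_)
  exact g.injective (by rw [hg i hi, hg j hj, hij])

theorem card_filter_forall_apply_ne_eq_sum (f : α → α) :
    (#{g : Perm α | ∀ i, g i ≠ f i} : ℤ) =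
      ∑ S ∈ univ.filter fun S : Finset α => Set.InjOn f S,
        (-1) ^ #S * ((Fintype.card α - #S)! : ℤ) := by
  let E : α → Finset (Perm α) := fun i => {g : Perm α | g i = f i}
  have h := inclusion_exclusion_card_inf_compl univ E
  have hinf (S : Finset α) : S.inf E = ({g | ∀ i ∈ S, g i = f i} : Finset (Perm α)) := by
    ext g; simp [E, mem_inf]
  have hinf_compl :
      univ.inf (fun i => (E i)ᶜ) = ({g | ∀ i, g i ≠ f i} : Finset (Perm α)) := by
    ext g; simp [E, mem_inf]
  rw [powerset_univ, hinf_compl] at h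
  rw [h, sum_filter]
  refine sum_congr rfl fun S _ => ?_
  split_ifs with hS
  · rw [hinf, card_filter_forall_mem_apply_eq_of_injOn hS]
  · rw [hinf, card_filter_forall_mem_apply_eq_of_not_injOn hS, Nat.cast_zero, mul_zero]

end Equiv.Perm

variable {α : Type*} [Fintype α] [DecidableEq α]

theorem numDerangements_card_eq_sum :
    (numDerangements (Fintype.card α) : ℤ) =
      ∑ S : Finset α, (-1) ^ #S * ((Fintype.card α - #S)! : ℤ) := by
  have h := Equiv.Perm.card_filter_forall_apply_ne_eq_sum (id : α → α)
  simp only [id, Set.injOn_id, filter_true] at h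
  rw [← h, ← card_derangements_eq_numDerangements, ← Fintype.card_subtype]
  rfl

theorem sum_range_choose_mul_factorial_sub_le (m : ℕ) :
    ∑ k ∈ range (m + 1), (m.choose k * (m - k)! : ℝ) ≤ exp 1 * m ! := by
  have hterm : ∀ k ∈ range (m + 1), (m.choose k * (m - k)! : ℝ) = m ! * (1 ^ k / k !) := by
    intro k hk
    rw [one_pow, Nat.cast_choose ℝ (Nat.lt_succ_iff.mp (mem_range.mp hk))]
    field_simp
  rw [sum_congr rfl hterm, ← mul_sum, mul_comm]
  gcongr
  exact sum_le_exp_of_nonneg zero_le_one _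

theorem sum_filter_superset_factorial_le (A : Finset α) :
    ∑ S ∈ univ.filter (A ⊆ ·), ((Fintype.card α - #S)! : ℝ) ≤
      exp 1 * (Fintype.card α - #A)! := by
  have hsupersets : univ.filter (A ⊆ ·) = Aᶜ.powerset.image (A ∪ ·) := by
    ext S
    simp only [mem_filter, mem_univ, true_and, mem_image, mem_powerset]
    refine ⟨fun h => ⟨S \ A, fun x hx => ?_, union_sdiff_of_subset h⟩, ?_⟩
    · exact mem_compl.2 (mem_sdiff.1 hx).2
    · rintro ⟨R, -, rfl⟩
      exact subset_union_left
  have hdisj : ∀ R ∈ Aᶜ.powerset, Disjoint A R := fun R hR =>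
    disjoint_of_subset_right (mem_powerset.1 hR) disjoint_compl_right
  rw [hsupersets, sum_image fun R hR R' hR' h => by
    rw [← union_sdiff_cancel_left (hdisj R hR), h, union_sdiff_cancel_left (hdisj R' hR')]]
  rw [sum_congr rfl fun R hR => by rw [card_union_of_disjoint (hdisj R hR)],
    sum_powerset_apply_card (fun k => ((Fintype.card α - (#A + k))! : ℝ)), card_compl]
  refine le_of_eq_of_le (sum_congr rfl fun k _ => ?_) (sum_range_choose_mul_factorial_sub_le _)
  rw [nsmul_eq_mul, Nat.sub_add_eq]

def collisionPairs {β : Type*} [DecidableEq β] (f : α → β) : Finset (α × α) :=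
  {p | p.1 ≠ p.2 ∧ f p.1 = f p.2}

theorem card_collisionPairs_le {β : Type*} [DecidableEq β] {f : α → β} {k : ℕ}
    (hf : ∀ y, #{i | f i = y} ≤ k) :
    #(collisionPairs f) ≤ Fintype.card α * (k - 1) := by
  have hpartners (i : α) : #{j | i ≠ j ∧ f i = f j} ≤ k - 1 := by
    have : ({j | i ≠ j ∧ f i = f j} : Finset α) = ({j | f j = f i} : Finset α).erase i := by
      ext j; simp [eq_comm]
    rw [this, card_erase_of_mem (by simp)]
    exact Nat.sub_le_sub_right (hf (f i)) 1
  calc #(collisionPairs f) = ∑ i, #{j | i ≠ j ∧ f i = f j} := by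
        simp only [collisionPairs, card_filter, Fintype.sum_prod_type]
    _ ≤ ∑ _i : α, (k - 1) := sum_le_sum fun i _ => hpartners i
    _ = Fintype.card α * (k - 1) := by simp

theorem sum_filter_not_injOn_le {β : Type*} [DecidableEq β] (f : α → β)
    (w : Finset α → ℝ) (hw : ∀ S, 0 ≤ w S) :
    ∑ S ∈ univ.filter fun S : Finset α => ¬ Set.InjOn f S, w S ≤
      ∑ p ∈ collisionPairs f, ∑ S ∈ univ.filter ({p.1, p.2} ⊆ ·), w S := by
  calc ∑ S ∈ univ.filter fun S : Finset α => ¬ Set.InjOn f S, w S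
      ≤ ∑ S, ∑ p ∈ (collisionPairs f).filter (fun p => {p.1, p.2} ⊆ S), w S := by
        rw [sum_filter]
        refine sum_le_sum fun S _ => ?_
        split_ifs with hS
        · exact sum_nonneg fun _ _ => hw S
        · have hcollision : ∃ a ∈ S, ∃ b ∈ S, f a = f b ∧ a ≠ b := by
            simpa [Set.InjOn] using hS
          obtain ⟨a, ha, b, hb, hab, hne⟩ := hcollision
          refine single_le_sum (f := fun _ => w S) (fun _ _ => hw S) (a := (a, b)) ?_
          simp [collisionPairs, hne, hab, insert_subset_iff, ha, hb]
    _ = ∑ p ∈ collisionPairs f, ∑ S ∈ univ.filter ({p.1, p.2} ⊆ ·), w S :=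
        sum_comm' fun S p => by simp [and_comm]

theorem abs_card_sub_numDerangements_le {k : ℕ} (f : α → α)
    (hf : ∀ y, #{i | f i = y} ≤ k) :
    |(#{g : Equiv.Perm α | ∀ i, g i ≠ f i} : ℝ) - numDerangements (Fintype.card α)| ≤
      exp 1 * (Fintype.card α * (k - 1) * (Fintype.card α - 2)! : ℕ) := by
  set n := Fintype.card α
  have hD := congrArg (Int.cast : ℤ → ℝ) (Equiv.Perm.card_filter_forall_apply_ne_eq_sum f)
  have hd := congrArg (Int.cast : ℤ → ℝ) (numDerangements_card_eq_sum (α := α))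
  push_cast at hD hd
  have hdiff : (#{g : Equiv.Perm α | ∀ i, g i ≠ f i} : ℝ) - numDerangements n =
      -∑ S ∈ univ.filter fun S : Finset α => ¬ Set.InjOn f S,
        (-1) ^ #S * ((n - #S)! : ℝ) := by
    rw [hD, hd, ← sum_filter_add_sum_filter_not univ fun S : Finset α => Set.InjOn f S]
    ring
  calc |(#{g : Equiv.Perm α | ∀ i, g i ≠ f i} : ℝ) - numDerangements n|
      ≤ ∑ S ∈ univ.filter fun S : Finset α => ¬ Set.InjOn f S, ((n - #S)! : ℝ) := by
        rw [hdiff, abs_neg]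
        exact (abs_sum_le_sum_abs _ _).trans_eq (sum_congr rfl fun S _ => by simp)
    _ ≤ ∑ p ∈ collisionPairs f,
          ∑ S ∈ univ.filter ({p.1, p.2} ⊆ ·), ((n - #S)! : ℝ) :=
        sum_filter_not_injOn_le f _ fun _ => by positivity
    _ ≤ ∑ p ∈ collisionPairs f, exp 1 * ((n - 2)! : ℝ) := by
        refine sum_le_sum fun p hp => (sum_filter_superset_factorial_le _).trans_eq ?_
        rw [card_pair (mem_filter.1 hp).2.1]
    _ ≤ exp 1 * (n * (k - 1) * (n - 2)! : ℕ) := by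
        rw [sum_const, nsmul_eq_mul, mul_left_comm, Nat.cast_mul _ (n - 2)!]
        gcongr
        exact_mod_cast card_collisionPairs_le hf

theorem abs_card_div_factorial_sub_le {k : ℕ} (f : α → α) (hf : ∀ y, #{i | f i = y} ≤ k)
    (hα : 2 ≤ Fintype.card α) :
    |(#{g : Equiv.Perm α | ∀ i, g i ≠ f i} : ℝ) / (Fintype.card α)! -
        numDerangements (Fintype.card α) / (Fintype.card α)!| ≤
      exp 1 * (k - 1 : ℕ) / (Fintype.card α - 1) := by
  obtain ⟨m, hm⟩ : ∃ m, Fintype.card α = m + 2 := ⟨_, (Nat.sub_add_cancel hα).symm⟩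
  calc _ = |(#{g : Equiv.Perm α | ∀ i, g i ≠ f i} : ℝ) - numDerangements (Fintype.card α)| /
        (Fintype.card α)! := by rw [← sub_div, abs_div, Nat.abs_cast]
    _ ≤ exp 1 * (Fintype.card α * (k - 1) * (Fintype.card α - 2)! : ℕ) /
        (Fintype.card α)! := by
        gcongr
        exact abs_card_sub_numDerangements_le f hf
    _ = exp 1 * (k - 1 : ℕ) / (Fintype.card α - 1) := by
        rw [hm, Nat.factorial_succ, Nat.factorial_succ, Nat.add_sub_cancel]
        push_cast
        rw [show (m : ℝ) + 2 - 1 = m + 1 by ring]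
        field_simp
        ring

/-- For every sequence of 2-max functions f_n : {1,...,n} → {1,...,n}, the
fraction of permutations that are f_n-derangements converges to 1/e. -/
theorem stmt_15 (F : (n : ℕ) → Fin n → Fin n)
    (hF : ∀ (n : ℕ) (y : Fin n),
      (Finset.univ.filter fun i : Fin n => F n i = y).card ≤ 2) :
    Tendsto
      (fun n : ℕ =>
        ((Finset.univ.filter fun g : Equiv.Perm (Fin n) => ∀ i, g i ≠ F n i).card : ℝ)
          / (Nat.factorial n))
      atTop (nhds (1 / Real.exp 1)) := by
  have hclose : ∀ n ≥ 2, dist ((numDerangements n : ℝ) / n !)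
      ((#{g : Equiv.Perm (Fin n) | ∀ i, g i ≠ F n i} : ℝ) / n !) ≤ exp 1 / (n - 1) :=
    fun n hn => by
      simpa [dist_eq, abs_sub_comm] using
        abs_card_div_factorial_sub_le (F n) (hF n) (by simpa using hn)
  have hbound : Tendsto (fun n : ℕ => exp 1 / ((n : ℝ) - 1)) atTop (nhds 0) :=
    tendsto_const_nhds.div_atTop
      (tendsto_atTop_add_const_right _ (-1) tendsto_natCast_atTop_atTop)
  rw [one_div, ← exp_neg]
  exact numDerangements_tendsto_inv_e.congr_dist
    (squeeze_zero' (.of_forall fun _ => dist_nonneg) (eventually_atTop.2 ⟨2, hclose⟩) hbound)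
end
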